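/- arXiv:2412.09689 — 2 statements merged into one kernel-verified Lean document; each statement's English description precedes it below -/
import Mathlib

section
/- For any unit vector n ∈ ℝ³ with P = I - n ⊗ nᵀ and any ξ ∈ ℝ³, there holds P (P ξ)^× = (ξ × n) ⊗ nᵀ, where (Pξ)^× = mskw(Pξ). -/
open Matrix

/-- The skew-symmetric cross-product matrix of `ξ ∈ ℝ³`. -/
def mskw (ξ : Fin 3 → ℝ) : Matrix (Fin 3) (Fin 3) ℝ :=
  !![0, -ξ 2, ξ 1; ξ 2, 0, -ξ 0; -ξ 1, ξ 0, 0]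

theorem stmt_2 (n ξ : Fin 3 → ℝ) (hn : n ⬝ᵥ n = 1)
    (P : Matrix (Fin 3) (Fin 3) ℝ) (hP : P = 1 - vecMulVec n n) :
    P * mskw (P *ᵥ ξ) = vecMulVec (crossProduct ξ n) n := by
  subst hP
  have hn' : n 0 * n 0 + n 1 * n 1 + n 2 * n 2 = 1 := by
    simpa [dotProduct, Fin.sum_univ_three] using hn
  ext i j
  fin_cases i <;> fin_cases j <;>
    simp [mskw, mul_apply, vecMulVec, mulVec, dotProduct, Fin.sum_univ_three,
      crossProduct, Matrix.one_apply, Matrix.sub_apply]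
  · ring
  · linear_combination ξ 2 * hn'
  · linear_combination (-ξ 1) * hn'
  · linear_combination (-ξ 2) * hn'
  · ring
  · linear_combination ξ 0 * hn'
  · linear_combination ξ 1 * hn'
  · linear_combination (-ξ 0) * hn'
  · ring
end

section
/- Let n ∈ ℝ³ be a unit vector and H a symmetric 3×3 matrix with H n = 0. Then H n^× - (H n^×)ᵀ = tr(H) n^×, where n^× = mskw(n). -/
open Matrix

theorem stmt_5 (n : Fin 3 → ℝ) (hn : n ⬝ᵥ n = 1)
    (H : Matrix (Fin 3) (Fin 3) ℝ) (hHsym : H = Hᵀ) (hHn : H *ᵥ n = 0) :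
    H * mskw n - (H * mskw n)ᵀ = H.trace • mskw n := by
  have h0 := congrFun hHn 0
  have h1 := congrFun hHn 1
  have h2 := congrFun hHn 2
  simp [mulVec, dotProduct, Fin.sum_univ_three] at h0 h1 h2
  have s01 : H 0 1 = H 1 0 := by have := congrFun (congrFun hHsym 0) 1; simpa using this
  have s02 : H 0 2 = H 2 0 := by have := congrFun (congrFun hHsym 0) 2; simpa using this
  have s12 : H 1 2 = H 2 1 := by have := congrFun (congrFun hHsym 1) 2; simpa using this
  simp only [s01, s02, s12] at h0 h1
  ext i j
  fin_cases i <;> fin_cases j <;>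
    simp [mskw, mul_apply, trace, diag, Fin.sum_univ_three, Matrix.smul_apply,
      Matrix.transpose_apply, vecHead, vecTail, s01, s02, s12] <;>
    linarith [h0, h1, h2]
end
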